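/- Let d ≥ 1 be a real number and let G be a seminormed additive commutative group such that ‖g‖ ≤ √d/2 for every g ∈ G. Define f(r) = sin(π r/√d) for r ≥ 0. Then for all x, y ∈ G one has f(‖x − y‖) ≤ f(‖x‖) + f(‖y‖). -/

import Mathlib

/-!
Rescaled by `t ↦ π t / L`, all norms become angles in `[0, π/2]`, where `sin` is monotone and
`sin (a + b) = sin a cos b + cos a sin b ≤ sin a + sin b`. The triangle inequality gives
`c ≤ a + b` for the angles of `x - y`, `x`, `y`; if `a + b` exceeds `π/2`, replace `b` by
`min b (π/2 - a)`, which still bounds `c - a` because `c ≤ π/2`.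
-/

open Real Set

theorem Real.sin_add_le_sin_add_sin {a b : ℝ} (ha : a ∈ Icc 0 π) (hb : b ∈ Icc 0 π) :
    sin (a + b) ≤ sin a + sin b := by
  have hsa := sin_nonneg_of_mem_Icc ha
  have hsb := sin_nonneg_of_mem_Icc hb
  rw [sin_add]
  nlinarith [cos_le_one a, cos_le_one b]

theorem Real.sin_le_sin_add_sin_of_le_add {a b c : ℝ} (ha : a ∈ Icc 0 (π / 2))
    (hb : b ∈ Icc 0 (π / 2)) (hc : c ∈ Icc 0 (π / 2)) (hcab : c ≤ a + b) :
    sin c ≤ sin a + sin b := by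
  obtain ⟨ha0, ha2⟩ := ha
  obtain ⟨hb0, hb2⟩ := hb
  obtain ⟨hc0, hc2⟩ := hc
  have hpi := pi_pos
  set b' := min b (π / 2 - a)
  have hb'b : b' ≤ b := min_le_left _ _
  have hb'0 : 0 ≤ b' := le_min hb0 (by linarith)
  have hab' : a + b' ≤ π / 2 := by linarith [min_le_right b (π / 2 - a)]
  have hcab' : c ≤ a + b' := by
    rw [← min_add_add_left]
    exact le_min hcab (by linarith)
  calc sin c ≤ sin (a + b') := sin_le_sin_of_le_of_le_pi_div_two (by linarith) hab' hcab'
    _ ≤ sin a + sin b' := sin_add_le_sin_add_sin ⟨ha0, by linarith⟩ ⟨hb'0, by linarith⟩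
    _ ≤ sin a + sin b := by gcongr; exact sin_le_sin_of_le_of_le_pi_div_two (by linarith) hb2 hb'b

theorem pi_mul_div_mem_Icc {r L : ℝ} (hr : 0 ≤ r) (hrL : r ≤ L / 2) :
    π * r / L ∈ Icc 0 (π / 2) := by
  have hL : 0 ≤ L := by linarith
  refine ⟨by positivity, ?_⟩
  rcases hL.eq_or_lt with rfl | hL
  · rw [div_zero]
    positivity
  · rw [div_le_iff₀ hL]
    nlinarith [pi_pos]

theorem sin_pi_mul_norm_sub_div_le {G : Type*} [SeminormedAddCommGroup G] {L : ℝ}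
    (hbound : ∀ g : G, ‖g‖ ≤ L / 2) (x y : G) :
    sin (π * ‖x - y‖ / L) ≤ sin (π * ‖x‖ / L) + sin (π * ‖y‖ / L) := by
  have hangle (g : G) := pi_mul_div_mem_Icc (norm_nonneg g) (hbound g)
  have hL : 0 ≤ L := by linarith [hbound 0, norm_nonneg (0 : G)]
  refine sin_le_sin_add_sin_of_le_add (hangle x) (hangle y) (hangle (x - y)) ?_
  rw [← add_div, ← mul_add]
  gcongr
  exact norm_sub_le x y

theorem sin_dist_subadditive_general {G : Type*} [SeminormedAddCommGroup G]
    (d : ℝ)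
    (hbound : ∀ g : G, ‖g‖ ≤ Real.sqrt d / 2)
    (x y : G) :
    Real.sin (π * ‖x - y‖ / Real.sqrt d) ≤
      Real.sin (π * ‖x‖ / Real.sqrt d) + Real.sin (π * ‖y‖ / Real.sqrt d) :=
  sin_pi_mul_norm_sub_div_le hbound x y

theorem sin_dist_subadditive {G : Type*} [SeminormedAddCommGroup G]
    (d : ℝ) (hd : 1 ≤ d)
    (hbound : ∀ g : G, ‖g‖ ≤ Real.sqrt d / 2)
    (x y : G) :
    Real.sin (π * ‖x - y‖ / Real.sqrt d) ≤
      Real.sin (π * ‖x‖ / Real.sqrt d) + Real.sin (π * ‖y‖ / Real.sqrt d) :=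
  sin_dist_subadditive_general d hbound x y
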